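/- arXiv:1708.05083 — 2 statements merged into one kernel-verified Lean document; each statement's English description precedes it below -/
import Mathlib

section
/- Let I₁, I₂ be independent positive atomless random variables with CDFs F₁, F₂, X_i = 1/I_i², and let K > 0. Define Φ = P(X₂ < −X₁/2 + K/2 and X₂ < −2X₁ + K) and Ψ(a,c) = (1 − F₂(1/√a))(1 − F₁(1/√c)). Then Ψ(K/3, K/3) ≤ Φ ≤ Ψ(K/2, K/3) + Ψ(K/3, K/2) − Ψ(K/3, K/3). -/
open MeasureTheory ProbabilityTheory Real

private lemma aux_iff (x t : ℝ) (hx : 0 < x) (ht : 0 < t) :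
    1 / x ^ 2 < t ↔ 1 / Real.sqrt t < x := by
  have hst : 0 < Real.sqrt t := Real.sqrt_pos.2 ht
  constructor
  · intro h
    have h1 : 1 / t < x ^ 2 := by
      rw [div_lt_iff₀ (by positivity)] at h
      rw [div_lt_iff₀ ht]
      nlinarith
    have h2 := Real.sqrt_lt_sqrt (by positivity) h1
    rwa [Real.sqrt_sq hx.le, one_div, Real.sqrt_inv, ← one_div] at h2
  · intro h
    have h2 : (1 / Real.sqrt t) ^ 2 < x ^ 2 :=
      pow_lt_pow_left₀ h (by positivity) (by norm_num)
    rw [div_pow, one_pow, Real.sq_sqrt ht.le] at h2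
    rw [div_lt_iff₀ (by positivity)]
    rw [div_lt_iff₀ ht] at h2
    nlinarith

private lemma tail_toReal {Ω : Type*} [MeasurableSpace Ω] (μ : Measure Ω)
    [IsProbabilityMeasure μ]
    (I : Ω → ℝ) (hI : Measurable I) (hatom : ∀ t : ℝ, μ {ω | I ω = t} = 0) (t : ℝ) :
    (μ (I ⁻¹' Set.Ioi t)).toReal = 1 - (μ {ω | I ω < t}).toReal := by
  have hms : MeasurableSet {ω | I ω < t} := measurableSet_lt hI measurable_const
  have h1 : μ (I ⁻¹' Set.Ioi t) = μ {ω | t ≤ I ω} := by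
    have hs1 : I ⁻¹' Set.Ioi t ⊆ {ω | t ≤ I ω} := by
      intro ω h; simp only [Set.mem_preimage, Set.mem_Ioi] at h
      exact le_of_lt h
    refine le_antisymm (measure_mono hs1) ?_
    calc μ {ω | t ≤ I ω} ≤ μ (I ⁻¹' Set.Ioi t ∪ {ω | I ω = t}) := by
          apply measure_mono; intro ω h
          simp only [Set.mem_setOf_eq] at h
          rcases lt_or_eq_of_le h with h' | h'
          · exact Or.inl h'
          · exact Or.inr h'.symm
      _ ≤ μ (I ⁻¹' Set.Ioi t) + μ {ω | I ω = t} := measure_union_le _ _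
      _ = μ (I ⁻¹' Set.Ioi t) := by rw [hatom, add_zero]
  have h2 : {ω | t ≤ I ω} = {ω | I ω < t}ᶜ := by ext ω; simp [not_lt]
  rw [h1, h2, measure_compl hms (measure_ne_top μ _), measure_univ,
    ENNReal.toReal_sub_of_le prob_le_one ENNReal.one_ne_top, ENNReal.toReal_one]

theorem outage_prob_bounds {Ω : Type*} [MeasurableSpace Ω] (μ : Measure Ω)
    [IsProbabilityMeasure μ]
    (I₁ I₂ : Ω → ℝ) (h1 : Measurable I₁) (h2 : Measurable I₂)
    (hpos1 : ∀ ω, 0 < I₁ ω) (hpos2 : ∀ ω, 0 < I₂ ω)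
    (hindep : IndepFun I₁ I₂ μ)
    (hatom1 : ∀ t : ℝ, μ {ω | I₁ ω = t} = 0) (hatom2 : ∀ t : ℝ, μ {ω | I₂ ω = t} = 0)
    (K : ℝ) (hK : 0 < K) :
    let Ψ : ℝ → ℝ → ℝ := fun a c =>
      (1 - (μ {ω | I₂ ω < 1 / Real.sqrt a}).toReal)
        * (1 - (μ {ω | I₁ ω < 1 / Real.sqrt c}).toReal)
    let Φ : ℝ := (μ {ω | 1 / (I₂ ω) ^ 2 < -(1 / (I₁ ω) ^ 2) / 2 + K / 2 ∧
      1 / (I₂ ω) ^ 2 < -2 * (1 / (I₁ ω) ^ 2) + K}).toReal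
    Ψ (K / 3) (K / 3) ≤ Φ ∧ Φ ≤ Ψ (K / 2) (K / 3) + Ψ (K / 3) (K / 2) - Ψ (K / 3) (K / 3) := by
  intro Ψ Φ
  have hK2 : (0:ℝ) < K / 2 := by linarith
  have hK3 : (0:ℝ) < K / 3 := by linarith
  set a2 : ℝ := 1 / Real.sqrt (K / 2) with ha2
  set a3 : ℝ := 1 / Real.sqrt (K / 3) with ha3
  have ha23 : a2 < a3 :=
    one_div_lt_one_div_of_lt (Real.sqrt_pos.2 hK3) (Real.sqrt_lt_sqrt hK3.le (by linarith))
  set A : Set Ω := {ω | 1 / (I₂ ω) ^ 2 < -(1 / (I₁ ω) ^ 2) / 2 + K / 2 ∧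
      1 / (I₂ ω) ^ 2 < -2 * (1 / (I₁ ω) ^ 2) + K} with hA
  -- product formula
  have hprod : ∀ s u : ℝ, (μ (I₁ ⁻¹' Set.Ioi s ∩ I₂ ⁻¹' Set.Ioi u)).toReal
      = (1 - (μ {ω | I₂ ω < u}).toReal) * (1 - (μ {ω | I₁ ω < s}).toReal) := by
    intro s u
    rw [hindep.measure_inter_preimage_eq_mul _ _ measurableSet_Ioi measurableSet_Ioi,
      ENNReal.toReal_mul, tail_toReal μ I₁ h1 hatom1, tail_toReal μ I₂ h2 hatom2]
    ring
  have hΨ : ∀ s u : ℝ, 0 < s → 0 < u →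
      Ψ s u = (μ (I₁ ⁻¹' Set.Ioi (1 / Real.sqrt u) ∩ I₂ ⁻¹' Set.Ioi (1 / Real.sqrt s))).toReal := by
    intro s u hs hu
    rw [hprod]
  constructor
  · -- lower bound
    rw [hΨ _ _ hK3 hK3]
    have hsub : I₁ ⁻¹' Set.Ioi a3 ∩ I₂ ⁻¹' Set.Ioi a3 ⊆ A := by
      rintro ω ⟨w1, w2⟩
      simp only [Set.mem_preimage, Set.mem_Ioi] at w1 w2
      have hx1 : 1 / (I₁ ω) ^ 2 < K / 3 := (aux_iff _ _ (hpos1 ω) hK3).2 w1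
      have hx2 : 1 / (I₂ ω) ^ 2 < K / 3 := (aux_iff _ _ (hpos2 ω) hK3).2 w2
      have hx1p : 0 < 1 / (I₁ ω) ^ 2 := by have := hpos1 ω; positivity
      exact ⟨by linarith, by linarith⟩
    exact ENNReal.toReal_mono (measure_ne_top μ _) (measure_mono hsub)
  · -- upper bound
    set B : Set Ω := I₁ ⁻¹' Set.Ioi a3 ∩ I₂ ⁻¹' Set.Ioi a2 with hB
    set C : Set Ω := I₁ ⁻¹' Set.Ioi a2 ∩ I₂ ⁻¹' Set.Ioi a3 with hC
    set D : Set Ω := I₁ ⁻¹' Set.Ioi a3 ∩ I₂ ⁻¹' Set.Ioi a3 with hD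
    have hsub2 : A ⊆ B ∪ C := by
      rintro ω ⟨w1, w2⟩
      have hx1p : 0 < 1 / (I₁ ω) ^ 2 := by have := hpos1 ω; positivity
      have hx2p : 0 < 1 / (I₂ ω) ^ 2 := by have := hpos2 ω; positivity
      by_cases hc : 1 / (I₁ ω) ^ 2 < K / 3
      · left
        exact ⟨(aux_iff _ _ (hpos1 ω) hK3).1 hc,
          (aux_iff _ _ (hpos2 ω) hK2).1 (by linarith)⟩
      · right
        push_neg at hc
        exact ⟨(aux_iff _ _ (hpos1 ω) hK2).1 (by linarith),
          (aux_iff _ _ (hpos2 ω) hK3).1 (by linarith)⟩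
    have hBC : B ∩ C = D := by
      ext ω
      simp only [hB, hC, hD, Set.mem_inter_iff, Set.mem_preimage, Set.mem_Ioi]
      constructor
      · rintro ⟨⟨u1, _⟩, ⟨_, v2⟩⟩; exact ⟨u1, v2⟩
      · rintro ⟨u1, v2⟩; exact ⟨⟨u1, lt_trans ha23 v2⟩, ⟨lt_trans ha23 u1, v2⟩⟩
    have hCm : MeasurableSet C :=
      (h1 measurableSet_Ioi).inter (h2 measurableSet_Ioi)
    have key : μ (B ∪ C) + μ D = μ B + μ C := by
      rw [← hBC]; exact measure_union_add_inter B hCm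
    have key' : (μ (B ∪ C)).toReal + (μ D).toReal = (μ B).toReal + (μ C).toReal := by
      have := congrArg ENNReal.toReal key
      rwa [ENNReal.toReal_add (measure_ne_top μ _) (measure_ne_top μ _),
        ENNReal.toReal_add (measure_ne_top μ _) (measure_ne_top μ _)] at this
    have hA_le : (μ A).toReal ≤ (μ (B ∪ C)).toReal :=
      ENNReal.toReal_mono (measure_ne_top μ _) (measure_mono hsub2)
    rw [hΨ _ _ hK2 hK3, hΨ _ _ hK3 hK2, hΨ _ _ hK3 hK3]
    show (μ A).toReal ≤ _
    linarith [hA_le, key']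
end

section
/- Under the assumptions of the previous statement, the outage probability P_out = 1 − Φ satisfies 1 − [Ψ(K/2,K/3) + Ψ(K/3,K/2) − Ψ(K/3,K/3)] ≤ P_out ≤ 1 − Ψ(K/3,K/3). -/
open MeasureTheory ProbabilityTheory Real

theorem outage_prob_upper_lower {Ω : Type*} [MeasurableSpace Ω] (μ : Measure Ω)
    [IsProbabilityMeasure μ]
    (I₁ I₂ : Ω → ℝ) (h1 : Measurable I₁) (h2 : Measurable I₂)
    (hpos1 : ∀ ω, 0 < I₁ ω) (hpos2 : ∀ ω, 0 < I₂ ω)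
    (hindep : IndepFun I₁ I₂ μ)
    (hatom1 : ∀ t : ℝ, μ {ω | I₁ ω = t} = 0) (hatom2 : ∀ t : ℝ, μ {ω | I₂ ω = t} = 0)
    (K : ℝ) (hK : 0 < K) :
    let Ψ : ℝ → ℝ → ℝ := fun a c =>
      (1 - (μ {ω | I₂ ω < 1 / Real.sqrt a}).toReal)
        * (1 - (μ {ω | I₁ ω < 1 / Real.sqrt c}).toReal)
    let Φ : ℝ := (μ {ω | 1 / (I₂ ω) ^ 2 < -(1 / (I₁ ω) ^ 2) / 2 + K / 2 ∧
      1 / (I₂ ω) ^ 2 < -2 * (1 / (I₁ ω) ^ 2) + K}).toReal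
    let Pout : ℝ := 1 - Φ
    1 - (Ψ (K / 2) (K / 3) + Ψ (K / 3) (K / 2) - Ψ (K / 3) (K / 3)) ≤ Pout ∧
      Pout ≤ 1 - Ψ (K / 3) (K / 3) := by
  intro Ψ Φ Pout
  -- auxiliary real facts
  have key : ∀ x a : ℝ, 0 < x → 0 < a → (¬ (x < 1 / Real.sqrt a) ↔ 1 / x ^ 2 ≤ a) := by
    intro x a hx ha
    rw [not_lt, div_le_iff₀ (Real.sqrt_pos.2 ha), div_le_iff₀ (by positivity : (0:ℝ) < x ^ 2)]
    have hs := Real.sq_sqrt ha.le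
    have hs' := Real.sqrt_pos.2 ha
    constructor <;> intro h <;>
      nlinarith [mul_pos hx hs', sq_nonneg (x * Real.sqrt a - 1), sq_nonneg (x * Real.sqrt a + 1)]
  have keyeq : ∀ x a : ℝ, 0 < x → 0 < a → 1 / x ^ 2 = a → x = 1 / Real.sqrt a := by
    intro x a hx ha h
    have hne : x ≠ 0 := ne_of_gt hx
    have hx2 : x ^ 2 = a⁻¹ := by
      field_simp at h ⊢
      linarith [h]
    rw [← Real.sqrt_sq hx.le, hx2, Real.sqrt_inv, one_div]
  -- measurability of sets
  have mS : ∀ (f : Ω → ℝ), Measurable f → ∀ a : ℝ, MeasurableSet {ω | 1 / (f ω) ^ 2 < a} := by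
    intro f hf a
    exact measurableSet_lt (measurable_const.div (hf.pow_const 2)) measurable_const
  -- the ≤ set has the same measure as the < set
  have eqlt : ∀ (f : Ω → ℝ), (∀ ω, 0 < f ω) → (∀ t, μ {ω | f ω = t} = 0) →
      ∀ a : ℝ, 0 < a → μ {ω | 1 / (f ω) ^ 2 ≤ a} = μ {ω | 1 / (f ω) ^ 2 < a} := by
    intro f hf0 hfa a ha
    refine le_antisymm ?_ (measure_mono fun ω h => show (1:ℝ) / (f ω) ^ 2 ≤ a from le_of_lt h)
    have hsub : {ω | 1 / (f ω) ^ 2 ≤ a} ⊆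
        {ω | 1 / (f ω) ^ 2 < a} ∪ {ω | f ω = 1 / Real.sqrt a} := by
      intro ω hω
      rcases lt_or_eq_of_le (show (1:ℝ) / (f ω) ^ 2 ≤ a from hω) with h | h
      · exact Or.inl h
      · exact Or.inr (keyeq _ _ (hf0 ω) ha h)
    calc μ {ω | 1 / (f ω) ^ 2 ≤ a}
        ≤ μ ({ω | 1 / (f ω) ^ 2 < a} ∪ {ω | f ω = 1 / Real.sqrt a}) := measure_mono hsub
      _ ≤ μ {ω | 1 / (f ω) ^ 2 < a} + μ {ω | f ω = 1 / Real.sqrt a} := measure_union_le _ _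
      _ = μ {ω | 1 / (f ω) ^ 2 < a} := by rw [hfa _, add_zero]
  -- complement computation
  have compl_eq : ∀ (f : Ω → ℝ), Measurable f → (∀ ω, 0 < f ω) → (∀ t, μ {ω | f ω = t} = 0) →
      ∀ a : ℝ, 0 < a →
      1 - (μ {ω | f ω < 1 / Real.sqrt a}).toReal = (μ {ω | 1 / (f ω) ^ 2 < a}).toReal := by
    intro f hf hf0 hfa a ha
    have hc : {ω | f ω < 1 / Real.sqrt a}ᶜ = {ω | 1 / (f ω) ^ 2 ≤ a} := by
      ext ω
      simp only [Set.mem_compl_iff, Set.mem_setOf_eq]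
      exact key _ _ (hf0 ω) ha
    have hms : MeasurableSet {ω | f ω < 1 / Real.sqrt a} :=
      measurableSet_lt hf measurable_const
    have h2' : μ {ω | f ω < 1 / Real.sqrt a}ᶜ = μ {ω | 1 / (f ω) ^ 2 < a} := by
      rw [hc, eqlt f hf0 hfa a ha]
    have hadd := measure_add_measure_compl (μ := μ) hms
    rw [h2'] at hadd
    have := congrArg ENNReal.toReal hadd
    rw [ENNReal.toReal_add (measure_ne_top μ _) (measure_ne_top μ _)] at this
    simp only [measure_univ, ENNReal.toReal_one] at this
    linarith
  -- Ψ as the measure of an intersection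
  have hΨ : ∀ a c : ℝ, 0 < a → 0 < c →
      Ψ a c = (μ ({ω | 1 / (I₂ ω) ^ 2 < a} ∩ {ω | 1 / (I₁ ω) ^ 2 < c})).toReal := by
    intro a c ha hc
    have hind : μ ({ω | 1 / (I₂ ω) ^ 2 < a} ∩ {ω | 1 / (I₁ ω) ^ 2 < c})
        = μ {ω | 1 / (I₂ ω) ^ 2 < a} * μ {ω | 1 / (I₁ ω) ^ 2 < c} := by
      have hset1 : {ω | 1 / (I₁ ω) ^ 2 < c} = I₁ ⁻¹' {x | 1 / x ^ 2 < c} := rfl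
      have hset2 : {ω | 1 / (I₂ ω) ^ 2 < a} = I₂ ⁻¹' {x | 1 / x ^ 2 < a} := rfl
      have hm : ∀ b : ℝ, MeasurableSet {x : ℝ | 1 / x ^ 2 < b} := fun b =>
        measurableSet_lt (measurable_const.div (measurable_id.pow_const 2)) measurable_const
      rw [hset1, hset2, Set.inter_comm,
        hindep.measure_inter_preimage_eq_mul _ _ (hm c) (hm a), mul_comm]
    show (1 - (μ {ω | I₂ ω < 1 / Real.sqrt a}).toReal)
        * (1 - (μ {ω | I₁ ω < 1 / Real.sqrt c}).toReal) = _
    rw [compl_eq I₂ h2 hpos2 hatom2 a ha, compl_eq I₁ h1 hpos1 hatom1 c hc, hind,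
      ENNReal.toReal_mul]
  -- positivity of the X's
  have hX1 : ∀ ω, 0 < 1 / (I₁ ω) ^ 2 := fun ω => by have := hpos1 ω; positivity
  have hX2 : ∀ ω, 0 < 1 / (I₂ ω) ^ 2 := fun ω => by have := hpos2 ω; positivity
  -- abbreviations
  set E : Set Ω := {ω | 1 / (I₂ ω) ^ 2 < -(1 / (I₁ ω) ^ 2) / 2 + K / 2 ∧
      1 / (I₂ ω) ^ 2 < -2 * (1 / (I₁ ω) ^ 2) + K} with hE
  set A : Set Ω := {ω | 1 / (I₂ ω) ^ 2 < K / 2} ∩ {ω | 1 / (I₁ ω) ^ 2 < K / 3} with hA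
  set B : Set Ω := {ω | 1 / (I₂ ω) ^ 2 < K / 3} ∩ {ω | 1 / (I₁ ω) ^ 2 < K / 2} with hB
  set C : Set Ω := {ω | 1 / (I₂ ω) ^ 2 < K / 3} ∩ {ω | 1 / (I₁ ω) ^ 2 < K / 3} with hC
  have hΨA : Ψ (K / 2) (K / 3) = (μ A).toReal := hΨ _ _ (by linarith) (by linarith)
  have hΨB : Ψ (K / 3) (K / 2) = (μ B).toReal := hΨ _ _ (by linarith) (by linarith)
  have hΨC : Ψ (K / 3) (K / 3) = (μ C).toReal := hΨ _ _ (by linarith) (by linarith)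
  have hAB : A ∩ B = C := by
    ext ω
    simp only [hA, hB, hC, Set.mem_inter_iff, Set.mem_setOf_eq]
    constructor
    · rintro ⟨⟨-, h2⟩, ⟨h3, -⟩⟩; exact ⟨h3, h2⟩
    · rintro ⟨h3, h2⟩; exact ⟨⟨by linarith, h2⟩, ⟨h3, by linarith⟩⟩
  have hCE : C ⊆ E := by
    intro ω hω
    obtain ⟨ha, hb⟩ := hω
    have := hX1 ω; have := hX2 ω
    simp only [hE, Set.mem_setOf_eq]
    constructor <;> [skip; skip] <;>
      · simp only [Set.mem_setOf_eq] at ha hb; linarith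
  have hEAB : E ⊆ A ∪ B := by
    intro ω hω
    obtain ⟨ha, hb⟩ := hω
    have h1' := hX1 ω; have h2' := hX2 ω
    by_cases hcase : 1 / (I₁ ω) ^ 2 < K / 3
    · exact Or.inl ⟨by simp only [Set.mem_setOf_eq]; linarith, hcase⟩
    · push_neg at hcase
      exact Or.inr ⟨by simp only [Set.mem_setOf_eq]; linarith,
        by simp only [Set.mem_setOf_eq]; linarith⟩
  have hmA : MeasurableSet A := (mS I₂ h2 _).inter (mS I₁ h1 _)
  have hmB : MeasurableSet B := (mS I₂ h2 _).inter (mS I₁ h1 _)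
  -- inclusion-exclusion
  have hiex : (μ (A ∪ B)).toReal + (μ C).toReal = (μ A).toReal + (μ B).toReal := by
    have := measure_union_add_inter (μ := μ) A hmB
    rw [hAB] at this
    have := congrArg ENNReal.toReal this
    rwa [ENNReal.toReal_add (measure_ne_top μ _) (measure_ne_top μ _),
      ENNReal.toReal_add (measure_ne_top μ _) (measure_ne_top μ _)] at this
  have hupper : Φ ≤ (μ A).toReal + (μ B).toReal - (μ C).toReal := by
    have h := ENNReal.toReal_mono (measure_ne_top μ _) (measure_mono hEAB)
    linarith
  have hlower : (μ C).toReal ≤ Φ :=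
    ENNReal.toReal_mono (measure_ne_top μ _) (measure_mono hCE)
  constructor
  · show 1 - (Ψ (K / 2) (K / 3) + Ψ (K / 3) (K / 2) - Ψ (K / 3) (K / 3)) ≤ 1 - Φ
    rw [hΨA, hΨB, hΨC]; linarith
  · show 1 - Φ ≤ 1 - Ψ (K / 3) (K / 3)
    rw [hΨC]; linarith
end
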